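/- arXiv:1808.04703 — 5 statements merged into one kernel-verified Lean document; each statement's English description precedes it below -/
import Mathlib

section
/- Let L be a Lie algebra over a field of characteristic p > 0 generated by elements h_1, ..., h_m, and let c be an element of the Lie subalgebra generated by the h_i that is a Lie commutator in the generators. Suppose [h_j,_{p^s} c] = 0 for all j, where p^s is a power of p. Then [x,_{p^s} c] = 0 for every x in L; in particular c is ad-nilpotent of index at most p^s. -/
/-- `IsLieWord h c` means `c` is a Lie commutator in the generators `h i`. -/
inductive IsLieWord {L : Type*} [LieRing L] {m : ℕ} (h : Fin m → L) : L → Prop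
  | of (i : Fin m) : IsLieWord h (h i)
  | bracket {x y : L} : IsLieWord h x → IsLieWord h y → IsLieWord h ⁅x, y⁆

/-- If a Lie algebra `L` over a field of characteristic `p > 0` is generated by
`h_1, ..., h_m`, `c` is a commutator in the generators, and `[h_j, p^s c] = 0`
for all `j`, then `[x, p^s c] = 0` for all `x ∈ L`; in particular `c` is
ad-nilpotent of index at most `p^s`. -/
theorem stmt1 {K : Type*} [Field K] {p : ℕ} (hp : p.Prime) [CharP K p]
    {L : Type*} [LieRing L] [LieAlgebra K L] {m : ℕ} (h : Fin m → L)
    (hgen : LieSubalgebra.lieSpan K L (Set.range h) = ⊤)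
    (c : L) (hc : IsLieWord h c) (s : ℕ)
    (hE : ∀ j, (fun a => ⁅a, c⁆)^[p ^ s] (h j) = 0) :
    ∀ x : L, (fun a => ⁅a, c⁆)^[p ^ s] x = 0 := by
  set D : LieDerivation K L L := LieDerivation.inner K L L c with hD
  have hDapp : ∀ x : L, D x = ⁅x, c⁆ := fun x => by simp [hD]
  have hfun : (fun a : L => ⁅a, c⁆) = ⇑D := by ext a; simp [hDapp]
  rw [hfun] at hE ⊢
  -- The kernel of D^[p^s] is a Lie subalgebra.
  set n := p ^ s with hn
  have hker_lie : ∀ a b : L, D^[n] a = 0 → D^[n] b = 0 → D^[n] ⁅a, b⁆ = 0 := by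
    intro a b ha hb
    rw [LieDerivation.iterate_apply_lie' D n a b]
    refine Finset.sum_eq_zero fun i hi => ?_
    rcases eq_or_ne i 0 with rfl | h0
    · simp [hb]
    rcases eq_or_ne i n with rfl | hni
    · simp [ha]
    · have hdvd : p ∣ n.choose i := Nat.Prime.dvd_choose_pow hp h0 hni
      obtain ⟨k, hk⟩ := hdvd
      rw [hk, ← Nat.cast_smul_eq_nsmul K]
      simp [CharP.cast_eq_zero K p]
  have hcoe : ∀ x : L, (⇑D)^[n] x = (D.toLinearMap ^ n) x := fun x =>
    (Module.End.pow_apply D.toLinearMap n x).symm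
  set S : LieSubalgebra K L :=
    { carrier := {x : L | D^[n] x = 0}
      add_mem' := fun {a b} ha hb => by
        simp only [Set.mem_setOf_eq, hcoe] at *
        rw [map_add, ha, hb, add_zero]
      zero_mem' := by simp only [Set.mem_setOf_eq, hcoe]; exact map_zero _
      smul_mem' := fun t a ha => by
        simp only [Set.mem_setOf_eq, hcoe] at *
        rw [map_smul, ha, smul_zero]
      lie_mem' := fun {a b} ha hb => hker_lie a b ha hb } with hS
  intro x
  have hx : x ∈ S := by
    have hle : LieSubalgebra.lieSpan K L (Set.range h) ≤ S := by
      rw [LieSubalgebra.lieSpan_le]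
      rintro _ ⟨j, rfl⟩
      exact hE j
    exact hle (hgen ▸ LieSubalgebra.mem_top x)
  exact hx
end

section
/- Let L be a finitely generated abstract group, M an abelian normal subgroup which is the normal closure of a finite set T of right Engel elements of L, and suppose L/M is nilpotent. Then L is nilpotent. -/
/-!
Conjugation makes the abelian group `M`, written additively, a `ℤ[L]`-module in which the
commutator `⁅m, x⁆` becomes `(1 - x) • m`. If `γ_c(L) ≤ M` and the series
`M ⊇ [M, L] ⊇ [M, L, L] ⊇ ⋯` of the module vanishes at step `n`, then `γ_{c+n}(L) = 1`; so it
suffices to show that `L` acts nilpotently on `M`. This goes by induction on a `c` with `γ_c(L)`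
acting trivially. For a finite generating set `S` of `L`, the left-normed commutators `Z` of
weight `c` in `S` act centrally, and since `γ_c(L) = ⟨Z⟩ γ_{c+1}(L)`, `γ_c(L)` acts trivially on
`M / [M, Z]`; by induction `L` acts nilpotently there. The operators `1 - z`, `z ∈ Z`, commute
and are nilpotent, because `M` is generated as a module by the conjugates of the finitely many
right Engel elements of `T`; hence finitely many of them generate a nilpotent ideal, and `[M, Z]`
is killed after boundedly many further steps.
-/

open scoped commutatorElement Pointwise IsMulCommutative

section LeftNormedCommutators

open Subgroup

variable {G : Type*} [Group G]

def leftNormedCommutators (S : Set G) : ℕ → Set G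
  | 0 => S
  | n + 1 => Set.image2 (⁅·, ·⁆) (leftNormedCommutators S n) S

theorem leftNormedCommutators_finite {S : Set G} (hS : S.Finite) :
    ∀ n, (leftNormedCommutators S n).Finite
  | 0 => hS
  | n + 1 => (leftNormedCommutators_finite hS n).image2 _ hS

theorem leftNormedCommutators_subset_lowerCentralSeries (S : Set G) :
    ∀ n, leftNormedCommutators S n ⊆ (⊤ : Subgroup G).lowerCentralSeries n
  | 0 => fun x _ => mem_top x
  | n + 1 => by
    rintro _ ⟨c, hc, s, -, rfl⟩
    exact commutator_mem_commutator
      (leftNormedCommutators_subset_lowerCentralSeries S n hc) (mem_top s)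

/- Modulo `K`, the commutator map is multiplicative in each argument on `closure Z × G`. -/
theorem commutatorElement_mem_closure_image2_sup {K : Subgroup G} [K.Normal] {Z S : Set G}
    (hS : closure S = ⊤) (hK : ⁅⁅closure Z, (⊤ : Subgroup G)⁆, ⊤⁆ ≤ K)
    {h : G} (hh : h ∈ closure Z) (x : G) :
    ⁅h, x⁆ ∈ closure (Set.image2 (⁅·, ·⁆) Z S) ⊔ K := by
  have hKW : K ≤ closure (Set.image2 (⁅·, ·⁆) Z S) ⊔ K := le_sup_right
  have hK' : ∀ u ∈ ⁅closure Z, (⊤ : Subgroup G)⁆, ∀ y, ⁅y, u⁆ ∈ K := fun u hu y => by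
    rw [← commutatorElement_inv]
    exact inv_mem (hK (commutator_mem_commutator hu (mem_top y)))
  have hZ : ∀ k ∈ closure Z, ∀ y, ⁅k, y⁆ ∈ ⁅closure Z, (⊤ : Subgroup G)⁆ :=
    fun k hk y => commutator_mem_commutator hk (mem_top y)
  induction hh using closure_induction generalizing x with
  | mem z hz =>
    have hx : x ∈ closure S := hS ▸ mem_top x
    induction hx using closure_induction with
    | mem s hs => exact le_sup_left (α := Subgroup G) (subset_closure ⟨z, hz, s, hs, rfl⟩)
    | one => simp
    | mul x y _ _ hx hy =>
      rw [show ⁅z, x * y⁆ = ⁅z, x⁆ * (⁅x, ⁅z, y⁆⁆ * ⁅z, y⁆) by group]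
      exact mul_mem hx (mul_mem (hKW (hK' _ (hZ z (subset_closure hz) y) x)) hy)
    | inv x _ hx =>
      rw [show ⁅z, x⁻¹⁆ = ⁅x⁻¹, ⁅z, x⁆⁻¹⁆ * ⁅z, x⁆⁻¹ by group]
      exact mul_mem (hKW (hK' _ (inv_mem (hZ z (subset_closure hz) x)) _)) (inv_mem hx)
  | one => simp
  | mul k l hk hl ihk ihl =>
    rw [show ⁅k * l, x⁆ = ⁅k, ⁅l, x⁆⁆ * ⁅l, x⁆ * ⁅k, x⁆ by group]
    exact mul_mem (mul_mem (hKW (hK' _ (hZ l hl x) k)) (ihl x)) (ihk x)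
  | inv k hk ihk =>
    rw [show ⁅k⁻¹, x⁆ = ⁅k⁻¹, ⁅k, x⁆⁻¹⁆ * ⁅k, x⁆⁻¹ by group]
    exact mul_mem (hKW (hK' _ (inv_mem (hZ k hk x)) _)) (inv_mem (ihk x))

theorem lowerCentralSeries_le_closure_leftNormedCommutators_sup {S : Set G}
    (hS : closure S = ⊤) : ∀ n, (⊤ : Subgroup G).lowerCentralSeries n ≤
      closure (leftNormedCommutators S n) ⊔ (⊤ : Subgroup G).lowerCentralSeries (n + 1)
  | 0 => by rw [Subgroup.lowerCentralSeries_zero, ← hS]; exact le_sup_left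
  | n + 1 => by
    show ⁅(⊤ : Subgroup G).lowerCentralSeries n, ⊤⁆ ≤ _
    rw [commutator_le]
    intro g hg x _
    rw [← SetLike.mem_coe] at hg
    have := lowerCentralSeries_le_closure_leftNormedCommutators_sup hS n hg
    rw [← SetLike.mem_coe, mul_normal] at this
    obtain ⟨k, hk, h, hh, rfl⟩ := this
    rw [show ⁅k * h, x⁆ = k * ⁅h, x⁆ * k⁻¹ * ⁅k, x⁆ by group]
    refine mul_mem (le_sup_right (α := Subgroup G)
      ((lowerCentralSeries_normal ⊤ (n + 2)).conj_mem _
        (commutator_mem_commutator hh (mem_top x)) k)) ?_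
    refine commutatorElement_mem_closure_image2_sup hS ?_ hk x
    exact commutator_mono (commutator_mono ((closure_le _).2
      (leftNormedCommutators_subset_lowerCentralSeries S n)) le_rfl) le_rfl

end LeftNormedCommutators

theorem Set.exists_pow_subset_zero_of_isNilpotent {R : Type*} [Ring R] {E : Set R}
    (hE : E.Finite) (hcomm : ∀ a ∈ E, ∀ b ∈ E, a * b = b * a)
    (hnil : ∀ a ∈ E, IsNilpotent a) : ∃ N, E ^ N ⊆ {0} := by
  have := Subring.isMulCommutative_closure hcomm
  set E' : Set (Subring.closure E) := Subtype.val ⁻¹' E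
  have hFG : (Ideal.span E').FG :=
    ⟨(hE.preimage Subtype.val_injective.injOn).toFinset, by simp [E']⟩
  obtain ⟨N, hN⟩ := hFG.isNilpotent_iff_le_nilradical.2 <| Ideal.span_le.2 fun a ha => by
    obtain ⟨n, hn⟩ := hnil a ha
    exact ⟨n, Subtype.ext hn⟩
  refine ⟨N, ?_⟩
  have hE' : E = (Subring.closure E).subtype '' E' := by
    simp [E', Set.image_preimage_eq_inter_range, Subring.subset_closure]
  rw [hE', ← Set.image_pow]
  rintro _ ⟨a, ha, rfl⟩
  have : a ∈ Ideal.span E' ^ N :=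
    Submodule.pow_subset_pow _ (Set.pow_subset_pow_left Ideal.subset_span ha)
  rw [hN, Submodule.zero_eq_bot, Ideal.mem_bot] at this
  simp [this]

namespace Representation

variable {k L V W : Type*} [Ring k] [Group L] [AddCommGroup V] [Module k V]
  [AddCommGroup W] [Module k W] (ρ : Representation k L V)

def bracket (S : Set L) (U : Submodule k V) : Submodule k V :=
  ⨆ x ∈ S, U.map (1 - ρ x)

def lowerCentralSeries (n : ℕ) : Submodule k V :=
  (ρ.bracket Set.univ)^[n] ⊤

theorem lowerCentralSeries_succ (n : ℕ) :
    ρ.lowerCentralSeries (n + 1) = ρ.bracket Set.univ (ρ.lowerCentralSeries n) :=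
  Function.iterate_succ_apply' _ _ _

theorem bracket_mono (S : Set L) : Monotone (ρ.bracket S) :=
  fun _ _ h => iSup₂_mono fun _ _ => Submodule.map_mono h

theorem bracket_commute {S S' : Set L} (h : ∀ x ∈ S, ∀ y ∈ S', Commute (1 - ρ x) (1 - ρ y)) :
    Function.Commute (ρ.bracket S) (ρ.bracket S') := by
  intro U
  simp only [bracket, Submodule.map_iSup, ← Submodule.map_comp, ← Module.End.mul_eq_comp]
  rw [iSup₂_comm]
  exact iSup_congr fun y => iSup_congr fun hy => iSup_congr fun x => iSup_congr fun hx => by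
    rw [(h x hx y hy).eq]

theorem map_bracket {σ : Representation k L W} {S : Set L} (f : V →ₗ[k] W)
    (hf : ∀ x ∈ S, σ x ∘ₗ f = f ∘ₗ ρ x) (U : Submodule k V) :
    (ρ.bracket S U).map f = σ.bracket S (U.map f) := by
  simp only [bracket, Submodule.map_iSup, ← Submodule.map_comp]
  refine iSup_congr fun x => iSup_congr fun hx => ?_
  rw [LinearMap.sub_comp, LinearMap.comp_sub, hf x hx]
  rfl

theorem map_lowerCentralSeries_le {σ : Representation k L W} (f : V →ₗ[k] W)
    (hf : ∀ x, σ x ∘ₗ f = f ∘ₗ ρ x) (n : ℕ) :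
    (ρ.lowerCentralSeries n).map f ≤ σ.lowerCentralSeries n := by
  induction n with
  | zero => exact le_top
  | succ n ih =>
    rw [lowerCentralSeries_succ, lowerCentralSeries_succ, ρ.map_bracket f fun x _ => hf x]
    exact σ.bracket_mono _ ih

theorem iterate_bracket_le (S : Set L) (U : Submodule k V) (n : ℕ) :
    (ρ.bracket S)^[n] U ≤ ⨆ r ∈ ((fun x => 1 - ρ x) '' S) ^ n, U.map r := by
  induction n with
  | zero => simp [Module.End.one_eq_id]
  | succ n ih =>
    rw [Function.iterate_succ_apply']
    refine (ρ.bracket_mono S ih).trans (iSup₂_le fun x hx => ?_)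
    simp only [Submodule.map_iSup, ← Submodule.map_comp]
    refine iSup₂_le fun r hr => le_iSup₂_of_le ((1 - ρ x) * r) ?_ le_rfl
    rw [pow_succ']
    exact Set.mul_mem_mul ⟨x, hx, rfl⟩ hr

theorem iterate_bracket_eq_bot {S : Set L} {n : ℕ}
    (hS : ((fun x => 1 - ρ x) '' S) ^ n ⊆ {0}) (U : Submodule k V) :
    (ρ.bracket S)^[n] U = ⊥ :=
  le_bot_iff.1 <| (ρ.iterate_bracket_le S U n).trans <| iSup₂_le fun r hr => by
    rw [hS hr, Submodule.map_zero]

theorem commute_of_map_commutatorElement_eq_one {g x : L} (h : ρ ⁅g, x⁆ = 1) :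
    Commute (ρ g) (ρ x) :=
  calc ρ g * ρ x = ρ (⁅g, x⁆ * (x * g)) := by rw [← map_mul]; group
    _ = ρ x * ρ g := by rw [map_mul, h, one_mul, map_mul]

theorem isNilpotent_of_forall_commute {T : Set V} (hT : T.Finite)
    (hspan : Submodule.span k (⋃ x, ρ x '' T) = ⊤) {f : Module.End k V}
    (hf : ∀ x, Commute f (ρ x)) (hfT : ∀ t ∈ T, ∃ n, (f ^ n) t = 0) : IsNilpotent f := by
  have : ∀ᶠ n in Filter.atTop, ∀ t ∈ T, (f ^ n) t = 0 :=
    (Filter.eventually_all_finite hT).2 fun t ht => by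
      obtain ⟨n, hn⟩ := hfT t ht
      refine Filter.eventually_atTop.2 ⟨n, fun m hm => ?_⟩
      rw [← Nat.sub_add_cancel hm, pow_add, Module.End.mul_apply, hn, map_zero]
  obtain ⟨n, hn⟩ := this.exists
  refine ⟨n, LinearMap.ker_eq_top.1 (top_le_iff.1 (hspan ▸ Submodule.span_le.2 ?_))⟩
  rintro _ ⟨_, ⟨x, rfl⟩, t, ht, rfl⟩
  rw [SetLike.mem_coe, LinearMap.mem_ker, ← Module.End.mul_apply, ((hf x).pow_left n).eq,
    Module.End.mul_apply, hn t ht, map_zero]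

theorem bracket_le_comap {S : Set L} (hS : ∀ z ∈ S, ∀ x, Commute (ρ z) (ρ x)) (x : L) :
    ρ.bracket S ⊤ ≤ (ρ.bracket S ⊤).comap (ρ x) := by
  rw [← Submodule.map_le_iff_le_comap, ρ.map_bracket (σ := ρ) (ρ x) fun z hz => (hS z hz x).eq]
  exact ρ.bracket_mono S le_top

theorem lowerCentralSeries_mul_le {Z : Set L} (hZ : ∀ z ∈ Z, ∀ x, Commute (1 - ρ z) (1 - ρ x))
    {m : ℕ} (hm : ρ.lowerCentralSeries m ≤ ρ.bracket Z ⊤) (j : ℕ) :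
    ρ.lowerCentralSeries (m * j) ≤ (ρ.bracket Z)^[j] ⊤ := by
  induction j with
  | zero => simp only [mul_zero, lowerCentralSeries, Function.iterate_zero_apply, le_refl]
  | succ j ih =>
    have hcomm : Function.Commute (ρ.bracket Set.univ)^[m * j] (ρ.bracket Z) :=
      (ρ.bracket_commute fun x _ z hz => (hZ z hz x).symm).iterate_left _
    calc ρ.lowerCentralSeries (m * (j + 1))
        = (ρ.bracket Set.univ)^[m * j] (ρ.lowerCentralSeries m) := by
          rw [lowerCentralSeries, lowerCentralSeries, mul_add, mul_one,
            Function.iterate_add_apply]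
      _ ≤ (ρ.bracket Set.univ)^[m * j] (ρ.bracket Z ⊤) := ((ρ.bracket_mono _).iterate _) hm
      _ = ρ.bracket Z (ρ.lowerCentralSeries (m * j)) := by rw [hcomm ⊤]; rfl
      _ ≤ (ρ.bracket Z)^[j + 1] ⊤ := by
          rw [Function.iterate_succ_apply']
          exact ρ.bracket_mono Z ih

section Quotient

variable (B : Submodule k V) (hB : ∀ x, B ≤ B.comap (ρ x))

theorem quotient_comp_mkQ (x : L) : ρ.quotient B hB x ∘ₗ B.mkQ = B.mkQ ∘ₗ ρ x :=
  Submodule.mapQ_mkQ _ _ _ (h := hB x)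

theorem one_sub_quotient_pow_mkQ (x : L) (n : ℕ) (v : V) :
    ((1 - ρ.quotient B hB x) ^ n) (B.mkQ v) = B.mkQ (((1 - ρ x) ^ n) v) := by
  have h : (1 - ρ.quotient B hB x) ∘ₗ B.mkQ = B.mkQ ∘ₗ (1 - ρ x) := by
    rw [LinearMap.sub_comp, LinearMap.comp_sub, quotient_comp_mkQ]
    rfl
  exact LinearMap.congr_fun (Module.End.commute_pow_left_of_commute h n) v

theorem span_quotient_eq_top {T : Set V} (hspan : Submodule.span k (⋃ x, ρ x '' T) = ⊤) :
    Submodule.span k (⋃ x, ρ.quotient B hB x '' (B.mkQ '' T)) = ⊤ := by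
  have h : ∀ x, ρ.quotient B hB x '' (B.mkQ '' T) = B.mkQ '' (ρ x '' T) := fun x => by
    rw [Set.image_image, Set.image_image]
    exact Set.image_congr fun v _ => LinearMap.congr_fun (ρ.quotient_comp_mkQ B hB x) v
  simp only [h, ← Set.image_iUnion, ← Submodule.map_span, hspan, Submodule.map_top,
    Submodule.range_mkQ]

end Quotient

theorem lowerCentralSeries_le_ker_quotient_bracket {S : Set L} (hS : Subgroup.closure S = ⊤)
    {c : ℕ} (hc : ∀ g ∈ (⊤ : Subgroup L).lowerCentralSeries (c + 1), ρ g = 1)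
    (hB : ∀ x, ρ.bracket (leftNormedCommutators S c) ⊤ ≤
      (ρ.bracket (leftNormedCommutators S c) ⊤).comap (ρ x)) :
    (⊤ : Subgroup L).lowerCentralSeries c ≤ (ρ.quotient _ hB).ker := by
  refine (lowerCentralSeries_le_closure_leftNormedCommutators_sup hS c).trans
    (sup_le ((Subgroup.closure_le _).2 fun z hz => ?_) fun g hg => ?_)
  · refine Submodule.linearMap_qext _ (LinearMap.ext fun v => ?_)
    simp only [LinearMap.comp_apply, quotient_apply, Submodule.mkQ_apply, Submodule.mapQ_apply,
      Module.End.one_apply, Submodule.Quotient.eq]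
    rw [← neg_sub, neg_mem_iff]
    exact Submodule.mem_iSup_of_mem z (Submodule.mem_iSup_of_mem hz
      (Submodule.mem_map_of_mem Submodule.mem_top))
  · refine Submodule.linearMap_qext _ (LinearMap.ext fun v => ?_)
    simp [hc g hg]

theorem exists_lowerCentralSeries_eq_bot [hL : Group.FG L] {T : Set V} (hT : T.Finite)
    (hspan : Submodule.span k (⋃ x, ρ x '' T) = ⊤)
    (hEngel : ∀ t ∈ T, ∀ x, ∃ n, ((1 - ρ x) ^ n : Module.End k V) t = 0) {c : ℕ}
    (hc : ∀ g ∈ (⊤ : Subgroup L).lowerCentralSeries c, ρ g = 1) :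
    ∃ n, ρ.lowerCentralSeries n = ⊥ := by
  obtain ⟨S, hSL, hSfin⟩ := Group.fg_iff.1 hL
  induction c generalizing V with
  | zero =>
    refine ⟨1, le_bot_iff.1 (iSup₂_le fun x _ => ?_)⟩
    rw [hc x (Subgroup.mem_top x), sub_self, Submodule.map_zero]
  | succ c ih =>
    set Z := leftNormedCommutators S c
    have hcomm : ∀ z ∈ Z, ∀ x, Commute (ρ z) (ρ x) := fun z hz x =>
      ρ.commute_of_map_commutatorElement_eq_one (hc _ (Subgroup.commutator_mem_commutator
        (leftNormedCommutators_subset_lowerCentralSeries S c hz) (Subgroup.mem_top x)))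
    have hcomm' : ∀ z ∈ Z, ∀ x, Commute (1 - ρ z) (1 - ρ x) := fun z hz x =>
      (Commute.one_right _).sub_right ((Commute.one_left _).sub_left (hcomm z hz x))
    have hB := ρ.bracket_le_comap hcomm
    obtain ⟨m, hm⟩ := ih (ρ.quotient _ hB) (hT.image _) (ρ.span_quotient_eq_top _ hB hspan)
      (by
        rintro _ ⟨t, ht, rfl⟩ x
        obtain ⟨n, hn⟩ := hEngel t ht x
        exact ⟨n, by rw [one_sub_quotient_pow_mkQ, hn, map_zero]⟩)
      (ρ.lowerCentralSeries_le_ker_quotient_bracket hSL hc hB)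
    have hmB : ρ.lowerCentralSeries m ≤ ρ.bracket Z ⊤ := by
      rw [← Submodule.ker_mkQ (ρ.bracket Z ⊤), LinearMap.le_ker_iff_map, ← le_bot_iff, ← hm]
      exact ρ.map_lowerCentralSeries_le _ (ρ.quotient_comp_mkQ _ hB) m
    obtain ⟨N, hN⟩ := Set.exists_pow_subset_zero_of_isNilpotent
      ((leftNormedCommutators_finite hSfin c).image fun z => 1 - ρ z)
      (by
        rintro _ ⟨z, hz, rfl⟩ _ ⟨z', hz', rfl⟩
        exact hcomm' z hz z')
      (by
        rintro _ ⟨z, hz, rfl⟩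
        exact ρ.isNilpotent_of_forall_commute hT hspan
          (fun x => (Commute.one_left _).sub_left (hcomm z hz x)) fun t ht => hEngel t ht z)
    exact ⟨m * N, le_bot_iff.1
      ((ρ.lowerCentralSeries_mul_le hcomm' hmB N).trans (ρ.iterate_bracket_eq_bot hN ⊤).le)⟩

end Representation

section ConjugationRepresentation

variable {L : Type*} [Group L] (M : Subgroup L) [M.Normal] [IsMulCommutative M]

def conjRepresentation : Representation ℤ L (Additive M) where
  toFun x := (MonoidHom.toAdditive (MulAut.conjNormal x).toMonoidHom).toIntLinearMap
  map_one' := by ext; simp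
  map_mul' x y := by ext; simp [mul_assoc]

theorem coe_toMul_conjRepresentation_apply (x : L) (a : Additive M) :
    ((conjRepresentation M x a).toMul : L) = x * a.toMul * x⁻¹ := rfl

theorem coe_toMul_one_sub_conjRepresentation_apply (x : L) (a : Additive M) :
    (((1 - conjRepresentation M x) a).toMul : L) = ⁅(a.toMul : L), x⁆ := by
  rw [LinearMap.sub_apply, Module.End.one_apply, toMul_sub, Subgroup.coe_div,
    coe_toMul_conjRepresentation_apply, commutatorElement_def, div_eq_mul_inv]
  group

theorem iterate_commutatorElement_eq_pow_one_sub (x : L) (a : Additive M) (n : ℕ) :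
    (fun g => ⁅g, x⁆)^[n] (a.toMul : L) = (((1 - conjRepresentation M x) ^ n) a).toMul := by
  induction n with
  | zero => rfl
  | succ n ih =>
    rw [Function.iterate_succ_apply', ih, pow_succ', Module.End.mul_apply,
      coe_toMul_one_sub_conjRepresentation_apply]

theorem conjRepresentation_eq_one {g : L} (hg : g ∈ M) : conjRepresentation M g = 1 := by
  refine LinearMap.ext fun a => Additive.toMul.injective (Subtype.ext ?_)
  rw [coe_toMul_conjRepresentation_apply, setLike_mul_comm hg a.toMul.2, mul_inv_cancel_right]
  rfl

theorem lowerCentralSeries_add_le_map_conjRepresentation {c : ℕ}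
    (hc : (⊤ : Subgroup L).lowerCentralSeries c ≤ M) (j : ℕ) :
    (⊤ : Subgroup L).lowerCentralSeries (c + j) ≤
      ((Representation.lowerCentralSeries (conjRepresentation M) j).toAddSubgroup.toSubgroup').map
        M.subtype := by
  induction j with
  | zero => simpa [Representation.lowerCentralSeries, ← MonoidHom.range_eq_map] using hc
  | succ j ih =>
    show ⁅(⊤ : Subgroup L).lowerCentralSeries (c + j), ⊤⁆ ≤ _
    rw [Subgroup.commutator_le]
    intro g hg x _
    obtain ⟨m, hm, rfl⟩ := Subgroup.mem_map.1 (ih hg)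
    refine Subgroup.mem_map.2 ⟨((1 - conjRepresentation M x) (.ofMul m)).toMul, ?_,
      coe_toMul_one_sub_conjRepresentation_apply M x (.ofMul m)⟩
    rw [AddSubgroup.mem_toSubgroup', ofMul_toMul, Submodule.mem_toAddSubgroup,
      Representation.lowerCentralSeries_succ]
    exact Submodule.mem_iSup_of_mem x (Submodule.mem_iSup_of_mem trivial
      (Submodule.mem_map_of_mem hm))

theorem span_conjRepresentation_normalClosure_eq_top (T : Set L)
    [IsMulCommutative (Subgroup.normalClosure T)] :
    Submodule.span ℤ (⋃ x, conjRepresentation (Subgroup.normalClosure T) x ''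
      {a | (a.toMul : L) ∈ T}) = ⊤ := by
  rw [eq_top_iff]
  rintro a -
  obtain ⟨⟨g, hg⟩, rfl⟩ := Additive.ofMul.surjective a
  induction hg using Subgroup.closure_induction with
  | mem g hg =>
    obtain ⟨t, ht, hconj⟩ := Group.mem_conjugatesOfSet_iff.1 hg
    obtain ⟨c, rfl⟩ := isConj_iff.1 hconj
    exact Submodule.subset_span (Set.mem_iUnion.2
      ⟨c, .ofMul ⟨t, Subgroup.subset_normalClosure ht⟩, ht, rfl⟩)
  | one => exact zero_mem _
  | mul g h _ _ hg hh => exact add_mem hg hh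
  | inv g _ hg => exact neg_mem hg

end ConjugationRepresentation

theorem exists_lowerCentralSeries_le_of_isNilpotent_quotient {G : Type*} [Group G]
    {N : Subgroup G} [N.Normal] (h : Group.IsNilpotent (G ⧸ N)) :
    ∃ c, (⊤ : Subgroup G).lowerCentralSeries c ≤ N := by
  obtain ⟨c, hc⟩ := Subgroup.nilpotent_iff_lowerCentralSeries.1 h
  refine ⟨c, ?_⟩
  rw [← QuotientGroup.ker_mk' N, ← Subgroup.map_eq_bot_iff, Subgroup.map_lowerCentralSeries,
    Subgroup.map_top_of_surjective _ (QuotientGroup.mk'_surjective N), hc]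

/-- If a finitely generated group `L` has an abelian normal subgroup `M` which is
the normal closure of a finite set `T` of right Engel elements of `L`, and `L/M`
is nilpotent, then `L` is nilpotent. -/
theorem stmt6 {L : Type*} [Group L] (hFG : Group.FG L) (T : Finset L)
    (hab : ∀ a ∈ Subgroup.normalClosure (T : Set L), ∀ b ∈ Subgroup.normalClosure (T : Set L),
      a * b = b * a)
    (hRE : ∀ t ∈ T, ∀ x : L, ∃ n : ℕ, (fun a => ⁅a, x⁆)^[n] t = 1)
    (hquo : Group.IsNilpotent (L ⧸ Subgroup.normalClosure (T : Set L))) :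
    Group.IsNilpotent L := by
  set M := Subgroup.normalClosure (T : Set L)
  have : IsMulCommutative M := ⟨⟨fun a b => Subtype.ext (hab a a.2 b b.2)⟩⟩
  obtain ⟨c, hc⟩ := exists_lowerCentralSeries_le_of_isNilpotent_quotient hquo
  obtain ⟨n, hn⟩ := Representation.exists_lowerCentralSeries_eq_bot (conjRepresentation M)
    (hL := hFG)
    (T.finite_toSet.preimage (Subtype.val_injective.comp Additive.toMul.injective).injOn)
    (span_conjRepresentation_normalClosure_eq_top (T : Set L))
    (fun a ha x => by
      obtain ⟨n, hn⟩ := hRE _ ha x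
      exact ⟨n, Additive.toMul.injective (Subtype.ext
        ((iterate_commutatorElement_eq_pow_one_sub M x a n).symm.trans hn))⟩)
    (fun g hg => conjRepresentation_eq_one M (hc hg))
  refine Subgroup.nilpotent_iff_lowerCentralSeries.2 ⟨c + n, le_bot_iff.1 ?_⟩
  simpa [hn] using lowerCentralSeries_add_le_map_conjRepresentation M hc n
end

section
/- Let \tilde L be a Lie ring with a Z/qZ-grading \tilde L = \bigoplus_{j=0}^{q-1} L_j (q prime), and suppose that for some integer n, every element x_0 \in L_0 satisfies [x_0,_n l] = 0 for all l \in \tilde L. Then every homogeneous element l_k \in L_k with k \not\equiv 0 (mod q) is ad-nilpotent of index at most q + n - 1. -/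
/-!
Bracketing with `l ∈ L_k` shifts the degree by `k`, and `k` is a unit of `ℤ/qℤ`, so for
homogeneous `y ∈ L_j` some `s < q` brings `[y,_s l]` into `L_0`; `n` further brackets then
kill it, and `s + n ≤ q + n - 1`. Since `ad l` is additive and `L` is the sum of the `L_j`,
this extends to all of `L`.
-/

open Function

theorem ZMod.exists_lt_add_nsmul_eq_zero {p : ℕ} [Fact p.Prime] (j : ZMod p) {k : ZMod p}
    (hk : k ≠ 0) : ∃ s < p, j + s • k = 0 :=
  ⟨(-j * k⁻¹).val, ZMod.val_lt _, by
    rw [nsmul_eq_mul, ZMod.natCast_zmod_val, mul_assoc, inv_mul_cancel₀ hk]; ring⟩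

section IterateLie

variable {L : Type*} [LieRing L]

def lieRightHom (l : L) : L →+ L where
  toFun a := ⁅a, l⁆
  map_zero' := zero_lie l
  map_add' a b := add_lie a b l

theorem iterate_lie_zero (l : L) (m : ℕ) : (fun a => ⁅a, l⁆)^[m] 0 = 0 :=
  iterate_map_zero (lieRightHom l) m

theorem iterate_lie_add (l y z : L) (m : ℕ) :
    (fun a => ⁅a, l⁆)^[m] (y + z) = (fun a => ⁅a, l⁆)^[m] y + (fun a => ⁅a, l⁆)^[m] z :=
  iterate_map_add (lieRightHom l) m y z

theorem iterate_lie_eq_zero_of_le {l y : L} {m N : ℕ} (h : (fun a => ⁅a, l⁆)^[m] y = 0)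
    (hmN : m ≤ N) : (fun a => ⁅a, l⁆)^[N] y = 0 := by
  obtain ⟨d, rfl⟩ := Nat.exists_eq_add_of_le hmN
  rw [add_comm, iterate_add_apply, h]
  exact iterate_lie_zero l d

theorem iterate_lie_mem {ι : Type*} [AddMonoid ι] (A : ι → AddSubgroup L)
    (hgrade : ∀ i j : ι, ∀ x ∈ A i, ∀ y ∈ A j, ⁅x, y⁆ ∈ A (i + j))
    {j k : ι} {y l : L} (hy : y ∈ A j) (hl : l ∈ A k) (m : ℕ) :
    (fun a => ⁅a, l⁆)^[m] y ∈ A (j + m • k) := by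
  induction m with
  | zero => simpa using hy
  | succ m ih =>
    rw [iterate_succ_apply', succ_nsmul, ← add_assoc]
    exact hgrade _ _ _ ih _ hl

theorem iterate_lie_eq_zero_of_mem_of_ne_zero {q : ℕ} [Fact q.Prime] (A : ZMod q → AddSubgroup L)
    (hgrade : ∀ i j : ZMod q, ∀ x ∈ A i, ∀ y ∈ A j, ⁅x, y⁆ ∈ A (i + j)) {n : ℕ}
    (h0 : ∀ x₀ ∈ A 0, ∀ l : L, (fun a => ⁅a, l⁆)^[n] x₀ = 0)
    {j k : ZMod q} (hk : k ≠ 0) {y l : L} (hy : y ∈ A j) (hl : l ∈ A k) :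
    (fun a => ⁅a, l⁆)^[q + n - 1] y = 0 := by
  obtain ⟨s, hsq, hs⟩ := ZMod.exists_lt_add_nsmul_eq_zero j hk
  have hy0 : (fun a => ⁅a, l⁆)^[s] y ∈ A 0 := hs ▸ iterate_lie_mem A hgrade hy hl s
  have hkill : (fun a => ⁅a, l⁆)^[n + s] y = 0 := by
    rw [iterate_add_apply]
    exact h0 _ hy0 l
  exact iterate_lie_eq_zero_of_le hkill (by omega)

end IterateLie

/-- Let `L` be a Lie ring with a `ℤ/qℤ`-grading `L = ⊕_j A j` (`q` prime), and
suppose every `x₀ ∈ A 0` satisfies `[x₀, n l] = 0` for all `l ∈ L`. Then every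
homogeneous element `l ∈ A k` with `k ≠ 0` is ad-nilpotent of index at most
`q + n - 1`. -/
theorem stmt9 {q : ℕ} (hq : q.Prime) {L : Type*} [LieRing L]
    (A : ZMod q → AddSubgroup L)
    (hgrade : ∀ i j : ZMod q, ∀ x ∈ A i, ∀ y ∈ A j, ⁅x, y⁆ ∈ A (i + j))
    (hspan : (⨆ i, A i) = (⊤ : AddSubgroup L))
    (n : ℕ)
    (h0 : ∀ x₀ ∈ A 0, ∀ l : L, (fun a => ⁅a, l⁆)^[n] x₀ = 0) :
    ∀ k : ZMod q, k ≠ 0 → ∀ l ∈ A k, ∀ x : L,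
      (fun a => ⁅a, l⁆)^[q + n - 1] x = 0 := by
  have : Fact q.Prime := ⟨hq⟩
  intro k hk l hl x
  have hx : x ∈ ⨆ i, A i := hspan ▸ AddSubgroup.mem_top x
  refine AddSubgroup.iSup_induction A (C := fun y => (fun a => ⁅a, l⁆)^[q + n - 1] y = 0) hx
    (fun j y hy => iterate_lie_eq_zero_of_mem_of_ne_zero A hgrade h0 hk hy hl)
    (iterate_lie_zero l _) fun y z hy hz => ?_
  rw [iterate_lie_add, hy, hz, add_zero]
end

section
/- Let G be a finite group, \varphi an automorphism of G whose order is coprime to |G|, and N a \varphi-invariant normal subgroup. Then the fixed points of the induced automorphism on G/N are images of fixed points in G: C_{G/N}(\varphi) = C_G(\varphi) N / N. -/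
/-!
Induction on the order `m` of `φ`. For a prime `p ∣ m`, the automorphism `τ = φ ^ (m / p)` has
order `p` and permutes the coset `gN`, whose size `|N|` is prime to `p`; a `p`-group acting on a set
of size prime to `p` has a fixed point, so `τ` fixes some `k₀ ∈ gN`. The fixed subgroup
`K = C_G(τ)` is `φ`-invariant and `φ` acts on it with order dividing `m / p`, so by induction the
coset `k₀(N ∩ K) ⊆ gN` contains a fixed point of `φ`.
-/

theorem QuotientGroup.mk_subgroupOf_eq_iff {G : Type*} [Group G] {N K : Subgroup G} {x y : K} :
    (x : K ⧸ N.subgroupOf K) = y ↔ ((x : G) : G ⧸ N) = (y : G) := by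
  simp only [QuotientGroup.eq, Subgroup.mem_subgroupOf, Subgroup.coe_mul, Subgroup.coe_inv]

theorem Subgroup.card_subgroupOf_dvd {G : Type*} [Group G] (N K : Subgroup G) :
    Nat.card (N.subgroupOf K) ∣ Nat.card N := by
  rw [← Subgroup.card_map_of_injective K.subtype_injective, Subgroup.subgroupOf_map_subtype]
  exact Subgroup.card_dvd_of_le inf_le_left

namespace MulAut

variable {G : Type*} [Group G]

section Invariant

variable (φ : MulAut G) {N : Subgroup G} (hN : ∀ x ∈ N, φ x ∈ N)
include hN

theorem pow_apply_mem (n : ℕ) : ∀ x ∈ N, (φ ^ n) x ∈ N := by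
  induction n with
  | zero => exact fun x hx => hx
  | succ n ih => exact fun x hx => by rw [pow_succ, mul_apply]; exact ih _ (hN x hx)

theorem mk_apply_eq_mk_apply {a b : G} (h : (a : G ⧸ N) = b) : (φ a : G ⧸ N) = φ b := by
  rw [QuotientGroup.eq] at h ⊢
  simpa only [← map_inv, ← map_mul] using hN _ h

theorem mk_pow_apply_eq {g : G} (hg : (φ g : G ⧸ N) = g) (n : ℕ) :
    ((φ ^ n) g : G ⧸ N) = g := by
  induction n with
  | zero => rfl
  | succ n ih => rw [pow_succ, mul_apply, mk_apply_eq_mk_apply _ (pow_apply_mem φ hN n) hg, ih]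

theorem map_eq_of_forall_apply_mem [Finite G] : N.map (φ : G →* G) = N :=
  Subgroup.eq_of_le_of_card_ge (Subgroup.map_le_iff_le_comap.2 hN)
    (Subgroup.card_map_of_injective φ.injective).ge

theorem apply_mem_iff [Finite G] (x : G) : φ x ∈ N ↔ x ∈ N := by
  conv_lhs => rw [← map_eq_of_forall_apply_mem φ hN]
  exact Subgroup.mem_map_iff_mem φ.injective

end Invariant

def fixedSubgroup (τ : MulAut G) : Subgroup G := (τ : G →* G).eqLocus (MonoidHom.id G)

@[simp]
theorem mem_fixedSubgroup {τ : MulAut G} {x : G} : x ∈ τ.fixedSubgroup ↔ τ x = x := Iff.rfl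

theorem apply_mem_fixedSubgroup_pow (φ : MulAut G) (j : ℕ) {x : G}
    (hx : x ∈ (φ ^ j).fixedSubgroup) : φ x ∈ (φ ^ j).fixedSubgroup := by
  rw [mem_fixedSubgroup, ← mul_apply, ← pow_succ, pow_succ', mul_apply, mem_fixedSubgroup.1 hx]

def restrict [Finite G] (φ : MulAut G) (K : Subgroup G) (hK : ∀ x ∈ K, φ x ∈ K) : MulAut K :=
  (φ.subgroupMap K).trans (MulEquiv.subgroupCongr (map_eq_of_forall_apply_mem φ hK))

theorem restrict_pow_apply [Finite G] (φ : MulAut G) (K : Subgroup G) (hK : ∀ x ∈ K, φ x ∈ K)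
    (n : ℕ) (x : K) : ((φ.restrict K hK ^ n) x : G) = (φ ^ n) x := by
  induction n with
  | zero => rfl
  | succ n ih => rw [pow_succ', mul_apply, pow_succ', mul_apply, ← ih]; rfl

theorem exists_fixed_mk_eq_of_pow_prime_pow_eq_one [Finite G] {p n : ℕ} [Fact p.Prime]
    (τ : MulAut G) (hτ : τ ^ p ^ n = 1) {N : Subgroup G} (hpN : ¬ p ∣ Nat.card N)
    (hN : ∀ x ∈ N, τ x ∈ N) {g : G} (hg : (τ g : G ⧸ N) = g) :
    ∃ k, τ k = k ∧ (k : G ⧸ N) = g := by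
  have hfiber (k : G) : (toPerm G τ k : G ⧸ N) = g ↔ (k : G ⧸ N) = g := by
    change ((τ k : G) : G ⧸ N) = g ↔ _
    conv_lhs => rw [← hg, QuotientGroup.eq, ← map_inv, ← map_mul, apply_mem_iff τ hN]
    exact QuotientGroup.eq.symm
  let σ : Equiv.Perm {k : G // (k : G ⧸ N) = g} := (toPerm G τ).subtypePerm hfiber
  have hσ : σ ^ p ^ n = 1 := by
    simp only [σ, Equiv.Perm.subtypePerm_pow, ← map_pow, hτ, map_one]
    rfl
  have hpgroup : IsPGroup p (Subgroup.zpowers σ) :=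
    IsPGroup.of_card_dvd_pow (by rw [Nat.card_zpowers]; exact orderOf_dvd_of_pow_eq_one hσ)
  have hcard : Nat.card {k : G // (k : G ⧸ N) = g} = Nat.card N :=
    Nat.card_congr
      { toFun := fun k => ⟨g⁻¹ * k, QuotientGroup.eq.1 k.2.symm⟩
        invFun := fun n => ⟨g * n, (QuotientGroup.eq.2 (by simp)).symm⟩
        left_inv := fun k => by simp
        right_inv := fun n => by simp }
  obtain ⟨⟨k, hk⟩, hfix⟩ := hpgroup.nonempty_fixed_point_of_prime_not_dvd_card _ (hcard ▸ hpN)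
  exact ⟨k, congrArg Subtype.val (hfix ⟨σ, Subgroup.mem_zpowers σ⟩), hk⟩

theorem exists_fixed_mk_eq_of_coprime [Finite G] (φ : MulAut G)
    {N : Subgroup G} (hcop : (orderOf φ).Coprime (Nat.card N)) (hN : ∀ x ∈ N, φ x ∈ N)
    {g : G} (hg : (φ g : G ⧸ N) = g) : ∃ k, φ k = k ∧ (k : G ⧸ N) = g := by
  induction h : orderOf φ using Nat.strong_induction_on generalizing G with
  | _ m ih =>
  rw [h] at hcop
  rcases eq_or_ne φ 1 with rfl | hφ
  · exact ⟨g, rfl, rfl⟩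
  have hm : 0 < m := h ▸ orderOf_pos φ
  obtain ⟨p, hp, hpm⟩ := Nat.exists_prime_and_dvd (h ▸ mt orderOf_eq_one_iff.1 hφ)
  have : Fact p.Prime := ⟨hp⟩
  have hτ : (φ ^ (m / p)) ^ p ^ 1 = 1 := by
    rw [pow_one, ← pow_mul, Nat.div_mul_cancel hpm, ← h, pow_orderOf_eq_one]
  obtain ⟨k₀, hk₀, hk₀g⟩ := exists_fixed_mk_eq_of_pow_prime_pow_eq_one (φ ^ (m / p)) hτ
    (hp.coprime_iff_not_dvd.1 (hcop.coprime_dvd_left hpm)) (pow_apply_mem φ hN _)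
    (mk_pow_apply_eq φ hN hg _)
  set K := (φ ^ (m / p)).fixedSubgroup
  have hK : ∀ x ∈ K, φ x ∈ K := fun x => apply_mem_fixedSubgroup_pow φ _
  have hφK : orderOf (φ.restrict K hK) ∣ m / p :=
    orderOf_dvd_of_pow_eq_one <| MulEquiv.ext fun x =>
      Subtype.ext ((restrict_pow_apply φ K hK _ x).trans x.2)
  have hlt : orderOf (φ.restrict K hK) < m :=
    (Nat.le_of_dvd (Nat.div_pos (Nat.le_of_dvd hm hpm) hp.pos) hφK).trans_lt
      (Nat.div_lt_self hm hp.one_lt)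
  have hcopK : (orderOf (φ.restrict K hK)).Coprime (Nat.card (N.subgroupOf K)) :=
    (hcop.coprime_dvd_left (hφK.trans (Nat.div_dvd_of_dvd hpm))).coprime_dvd_right
      (N.card_subgroupOf_dvd K)
  have hk₀' : ((φ.restrict K hK ⟨k₀, hk₀⟩ : K) : K ⧸ N.subgroupOf K) = (⟨k₀, hk₀⟩ : K) :=
    QuotientGroup.mk_subgroupOf_eq_iff.2 <|
      (mk_apply_eq_mk_apply φ hN hk₀g).trans (hg.trans hk₀g.symm)
  obtain ⟨k, hk, hkk₀⟩ := ih _ hlt (φ.restrict K hK) hcopK (fun x hx => hN _ hx) hk₀' rfl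
  exact ⟨k, congrArg Subtype.val hk, (QuotientGroup.mk_subgroupOf_eq_iff.1 hkk₀).trans hk₀g⟩

end MulAut

/-- Coprime action covering property: if `φ` is an automorphism of a finite
group `G` of order coprime to `|G|`, `N` is a `φ`-invariant normal subgroup and
`ψ` is the induced automorphism of `G/N`, then the fixed points of `ψ` are
exactly the images of fixed points of `φ`: `C_{G/N}(φ) = C_G(φ)N/N`. -/
theorem stmt11 {G : Type*} [Group G] [Fintype G] (φ : G ≃* G)
    (hcop : Nat.Coprime (orderOf φ) (Fintype.card G))
    (N : Subgroup G) [N.Normal] (hN : ∀ g ∈ N, φ g ∈ N)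
    (ψ : G ⧸ N ≃* G ⧸ N)
    (hψ : ∀ g : G, ψ (QuotientGroup.mk g) = QuotientGroup.mk (φ g)) :
    ∀ x : G ⧸ N, ψ x = x ↔ ∃ g : G, φ g = g ∧ QuotientGroup.mk g = x := by
  intro x
  constructor
  · intro hx
    obtain ⟨g, rfl⟩ := QuotientGroup.mk_surjective x
    rw [hψ] at hx
    have hcopN : (orderOf φ).Coprime (Nat.card N) :=
      hcop.coprime_dvd_right (Nat.card_eq_fintype_card (α := G) ▸ N.card_subgroup_dvd_card)
    exact MulAut.exists_fixed_mk_eq_of_coprime φ hcopN hN hx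
  · rintro ⟨g, hg, rfl⟩
    rw [hψ, hg]
end

section
/- Let L be a nilpotent group, Z a normal subgroup of L such that Z is nilpotent and L/Z' is nilpotent, where Z' is the derived subgroup of Z. Then L is nilpotent (P. Hall's nilpotency criterion). -/
/-!
Write `[H, ₙG]` for `H.commutatorTopIter n` and `γᵢ(Z)` for `Z.lowerCentralSeries i`, so that
`γ₀(Z) = Z` and `γ₁(Z) = Z'`. As `L/Z'` is nilpotent, `[Z, ₖL] ≤ Z'` for some `k`. By the three
subgroups lemma, `[[A, B], ₙL]` lies in the product of the `[[A, ₖL], [B, ₗL]]` with `k + l = n`;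
applied to `γᵢ₊₁(Z) = [γᵢ(Z), Z]`, together with `[γᵢ(Z), Z'] ≤ γᵢ₊₂(Z)`, this shows by induction
on `i` that every `γᵢ(Z)` contains some `[Z, ₘL]`. Since `Z` is nilpotent, some `[Z, ₘL]` is
trivial, and then `γₖ₊ₘ(L) ≤ [Z, ₘL] = 1`.
-/

namespace Subgroup

variable {G : Type*} [Group G]

lemma commutator_le_iff_map_commutator_eq_bot {T : Subgroup G} [T.Normal] (P Q : Subgroup G) :
    ⁅P, Q⁆ ≤ T ↔ ⁅P.map (QuotientGroup.mk' T), Q.map (QuotientGroup.mk' T)⁆ = ⊥ := by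
  rw [← map_commutator, map_eq_bot_iff, QuotientGroup.ker_mk']

lemma commutator_commutator_le_of_rotate {H₁ H₂ H₃ T : Subgroup G} [T.Normal]
    (h1 : ⁅⁅H₂, H₃⁆, H₁⁆ ≤ T) (h2 : ⁅⁅H₃, H₁⁆, H₂⁆ ≤ T) : ⁅⁅H₁, H₂⁆, H₃⁆ ≤ T := by
  rw [commutator_le_iff_map_commutator_eq_bot, map_commutator] at h1 h2 ⊢
  exact commutator_commutator_eq_bot_of_rotate h1 h2

lemma commutator_sup_left_le {A B C T : Subgroup G} [T.Normal]
    (hA : ⁅A, C⁆ ≤ T) (hB : ⁅B, C⁆ ≤ T) : ⁅A ⊔ B, C⁆ ≤ T := by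
  rw [commutator_le_iff_map_commutator_eq_bot, commutator_eq_bot_iff_le_centralizer] at hA hB ⊢
  rw [map_sup]
  exact sup_le hA hB

lemma commutator_commutator_top_le (A B : Subgroup G) [A.Normal] [B.Normal] :
    ⁅⁅A, B⁆, (⊤ : Subgroup G)⁆ ≤ ⁅⁅A, (⊤ : Subgroup G)⁆, B⁆ ⊔ ⁅A, ⁅B, (⊤ : Subgroup G)⁆⁆ := by
  refine commutator_commutator_le_of_rotate ?_ ?_
  · exact (commutator_comm_le _ _).trans le_sup_right
  · exact (commutator_mono (commutator_comm_le _ _) le_rfl).trans le_sup_left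

def commutatorTopIter (H : Subgroup G) (n : ℕ) : Subgroup G :=
  (fun K => ⁅K, ⊤⁆)^[n] H

lemma commutatorTopIter_succ (H : Subgroup G) (n : ℕ) :
    H.commutatorTopIter (n + 1) = ⁅H.commutatorTopIter n, ⊤⁆ :=
  Function.iterate_succ_apply' _ n H

lemma commutatorTopIter_succ' (H : Subgroup G) (n : ℕ) :
    H.commutatorTopIter (n + 1) = (⁅H, ⊤⁆ : Subgroup G).commutatorTopIter n := rfl

lemma commutatorTopIter_add (H : Subgroup G) (m n : ℕ) :
    H.commutatorTopIter (m + n) = (H.commutatorTopIter m).commutatorTopIter n := by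
  rw [commutatorTopIter, add_comm, Function.iterate_add_apply]; rfl

instance commutatorTopIter_normal (H : Subgroup G) [H.Normal] (n : ℕ) :
    (H.commutatorTopIter n).Normal := by
  induction n with
  | zero => assumption
  | succ n ih => rw [commutatorTopIter_succ]; infer_instance

lemma commutatorTopIter_mono {H K : Subgroup G} (h : H ≤ K) (n : ℕ) :
    H.commutatorTopIter n ≤ K.commutatorTopIter n :=
  Monotone.iterate (fun _ _ hle => commutator_mono hle le_rfl) n h

lemma commutatorTopIter_le_self (H : Subgroup G) [H.Normal] (n : ℕ) :
    H.commutatorTopIter n ≤ H := by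
  induction n with
  | zero => exact le_rfl
  | succ n ih => exact (commutatorTopIter_succ H n).trans_le ((commutator_le_left _ _).trans ih)

lemma commutatorTopIter_le_of_le {H N : Subgroup G} [N.Normal] {k n : ℕ}
    (hH : H.commutatorTopIter k ≤ N) (hkn : k ≤ n) : H.commutatorTopIter n ≤ N := by
  obtain ⟨m, rfl⟩ := Nat.exists_eq_add_of_le hkn
  rw [commutatorTopIter_add]
  exact (commutatorTopIter_mono hH m).trans (commutatorTopIter_le_self N m)

lemma commutatorTopIter_sup_le (A B : Subgroup G) [A.Normal] [B.Normal] (n : ℕ) :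
    (A ⊔ B).commutatorTopIter n ≤ A.commutatorTopIter n ⊔ B.commutatorTopIter n := by
  induction n with
  | zero => exact le_rfl
  | succ n ih =>
    rw [commutatorTopIter_succ]
    refine (commutator_mono ih le_rfl).trans (commutator_sup_left_le ?_ ?_)
    · exact (commutatorTopIter_succ A n).ge.trans le_sup_left
    · exact (commutatorTopIter_succ B n).ge.trans le_sup_right

lemma top_commutatorTopIter (n : ℕ) :
    (⊤ : Subgroup G).commutatorTopIter n = (⊤ : Subgroup G).lowerCentralSeries n := by
  induction n with
  | zero => rfl
  | succ n ih => rw [commutatorTopIter_succ, ih, lowerCentralSeries_succ]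

lemma commutatorTopIter_commutator_le {A B T : Subgroup G} [A.Normal] [B.Normal] [T.Normal]
    (n : ℕ) (h : ∀ a b, a + b = n → ⁅A.commutatorTopIter a, B.commutatorTopIter b⁆ ≤ T) :
    (⁅A, B⁆ : Subgroup G).commutatorTopIter n ≤ T := by
  induction n generalizing A B with
  | zero => exact h 0 0 rfl
  | succ n ih =>
    rw [commutatorTopIter_succ']
    refine (commutatorTopIter_mono (commutator_commutator_top_le A B) n).trans
      ((commutatorTopIter_sup_le _ _ n).trans (sup_le ?_ ?_))
    · exact ih fun a b hab => h (a + 1) b (by omega)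
    · exact ih fun a b hab => h a (b + 1) (by omega)

lemma exists_lowerCentralSeries_le_of_isNilpotent_quotient (N : Subgroup G) [N.Normal]
    (h : Group.IsNilpotent (G ⧸ N)) : ∃ d, (⊤ : Subgroup G).lowerCentralSeries d ≤ N := by
  obtain ⟨d, hd⟩ := nilpotent_iff_lowerCentralSeries.mp h
  refine ⟨d, ?_⟩
  rw [← QuotientGroup.ker_mk' N, ← map_eq_bot_iff, map_lowerCentralSeries,
    map_top_of_surjective _ (QuotientGroup.mk'_surjective N), hd]

section

variable (Z : Subgroup G) [Z.Normal]

lemma commutator_lowerCentralSeries_commutator_le (i : ℕ) :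
    ⁅Z.lowerCentralSeries i, ⁅Z, Z⁆⁆ ≤ Z.lowerCentralSeries (i + 2) := by
  rw [commutator_comm]
  refine commutator_commutator_le_of_rotate ?_ le_rfl
  exact commutator_mono (commutator_comm_le _ _) le_rfl

lemma exists_commutatorTopIter_lowerCentralSeries_le {d : ℕ}
    (hd : Z.commutatorTopIter d ≤ ⁅Z, Z⁆) (i : ℕ) :
    ∃ K, (Z.lowerCentralSeries i).commutatorTopIter K ≤ Z.lowerCentralSeries (i + 1) := by
  induction i with
  | zero => exact ⟨d, hd⟩
  | succ i ih =>
    obtain ⟨K, hK⟩ := ih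
    refine ⟨K + d, commutatorTopIter_commutator_le _ fun a b hab => ?_⟩
    rcases le_or_gt K a with ha | ha
    · exact commutator_mono (commutatorTopIter_le_of_le hK ha) (commutatorTopIter_le_self Z b)
    · refine (commutator_mono (commutatorTopIter_le_self _ a) ?_).trans
        (commutator_lowerCentralSeries_commutator_le Z i)
      exact commutatorTopIter_le_of_le hd (by omega)

lemma exists_commutatorTopIter_le_lowerCentralSeries {d : ℕ}
    (hd : Z.commutatorTopIter d ≤ ⁅Z, Z⁆) (i : ℕ) :
    ∃ M, Z.commutatorTopIter M ≤ Z.lowerCentralSeries i := by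
  induction i with
  | zero => exact ⟨0, le_rfl⟩
  | succ i ih =>
    obtain ⟨M, hM⟩ := ih
    obtain ⟨K, hK⟩ := exists_commutatorTopIter_lowerCentralSeries_le Z hd i
    exact ⟨M + K, (commutatorTopIter_add Z M K).trans_le ((commutatorTopIter_mono hM K).trans hK)⟩

end

end Subgroup

open Subgroup

/-- P. Hall's nilpotency criterion: if `Z` is a normal subgroup of `L` such that
`Z` is nilpotent and `L/Z'` is nilpotent (`Z' = [Z,Z]` the derived subgroup of
`Z`), then `L` is nilpotent. -/
theorem stmt13 {L : Type*} [Group L] (Z : Subgroup L) [Z.Normal]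
    (hZ : Group.IsNilpotent ↥Z)
    (hq : Group.IsNilpotent (L ⧸ (⁅Z, Z⁆ : Subgroup L))) :
    Group.IsNilpotent L := by
  obtain ⟨c, hc⟩ := (isNilpotent_iff_lowerCentralSeries Z).mp hZ
  obtain ⟨d, hd⟩ := exists_lowerCentralSeries_le_of_isNilpotent_quotient _ hq
  have hdZ : (⊤ : Subgroup L).commutatorTopIter d ≤ ⁅Z, Z⁆ := (top_commutatorTopIter d).trans_le hd
  obtain ⟨M, hM⟩ := exists_commutatorTopIter_le_lowerCentralSeries Z
    ((commutatorTopIter_mono le_top d).trans hdZ) c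
  refine Subgroup.nilpotent_iff_lowerCentralSeries.mpr ⟨d + M, le_bot_iff.mp ?_⟩
  calc (⊤ : Subgroup L).lowerCentralSeries (d + M)
      = ((⊤ : Subgroup L).commutatorTopIter d).commutatorTopIter M := by
        rw [← top_commutatorTopIter, commutatorTopIter_add]
    _ ≤ Z.commutatorTopIter M :=
        commutatorTopIter_mono (hdZ.trans (commutator_le_right Z Z)) M
    _ ≤ ⊥ := hc ▸ hM
end
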